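/- arXiv:1307.3817 — 4 statements merged into one kernel-verified Lean document; each statement's English description precedes it below -/
import Mathlib

section
/- Let (X,f) be a topological dynamical system and n a positive integer. Then (X,f) is strongly multi-transitive if and only if (X,f^n) is strongly multi-transitive. -/
/-!
Multi-transitivity of `f^n` with respect to `a` is multi-transitivity of `f` with respect to
`n • a`, which gives one direction. For the other, the product system of `f^n` with respect to
`a` is the `n`-th iterate of the product system of `f` with respect to `a`, and a map is
transitive as soon as one of its positive iterates is.
-/

open Function Set Filter Topology MeasureTheory

/-- A topological dynamical system `f : X → X` is (topologically) transitive if for every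
two non-empty open subsets `U`, `V` there exists `n ≥ 1` with `f^[n] '' U ∩ V ≠ ∅`. -/
def IsTopTransitive {X : Type*} [TopologicalSpace X] (f : X → X) : Prop :=
  ∀ U V : Set X, IsOpen U → IsOpen V → U.Nonempty → V.Nonempty →
    ∃ n : ℕ, 1 ≤ n ∧ (f^[n] '' U ∩ V).Nonempty

/-- Multi-transitivity with respect to a vector `a = (a₁, …, a_r)`: the product system
`(X^r, f^{a₁} × ⋯ × f^{a_r})` is transitive. -/
def MultiTransWrt {X : Type*} [TopologicalSpace X] (f : X → X) {r : ℕ} (a : Fin r → ℕ) : Prop :=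
  IsTopTransitive (fun x : Fin r → X => fun i => f^[a i] (x i))

/-- `(X, f)` is multi-transitive if it is multi-transitive with respect to `(1, 2, …, n)`
for every `n ≥ 1`. -/
def MultiTrans {X : Type*} [TopologicalSpace X] (f : X → X) : Prop :=
  ∀ n : ℕ, 1 ≤ n → MultiTransWrt f (fun i : Fin n => (i : ℕ) + 1)

/-- `(X, f)` is strongly multi-transitive if it is multi-transitive with respect to every
vector of positive integers. -/
def StrongMultiTrans {X : Type*} [TopologicalSpace X] (f : X → X) : Prop :=
  ∀ r : ℕ, 1 ≤ r → ∀ a : Fin r → ℕ, (∀ i, 1 ≤ a i) → MultiTransWrt f a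

/-- The hitting time set `N(U, V) = {n ≥ 1 : f^[n] '' U ∩ V ≠ ∅}`. -/
def HittingTimes {X : Type*} [TopologicalSpace X] (f : X → X) (U V : Set X) : Set ℕ :=
  {n : ℕ | 1 ≤ n ∧ (f^[n] '' U ∩ V).Nonempty}

theorem IsTopTransitive.of_iterate {X : Type*} [TopologicalSpace X] {g : X → X} {k : ℕ}
    (hk : 1 ≤ k) (h : IsTopTransitive g^[k]) : IsTopTransitive g := by
  intro U V hU hV hUne hVne
  obtain ⟨m, hm, hUV⟩ := h U V hU hV hUne hVne
  exact ⟨k * m, Nat.mul_pos hk hm, by rwa [iterate_mul]⟩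

theorem multiTransWrt_iterate_iff {X : Type*} [TopologicalSpace X] (f : X → X) (n : ℕ)
    {r : ℕ} (a : Fin r → ℕ) : MultiTransWrt f^[n] a ↔ MultiTransWrt f (fun i => n * a i) := by
  simp only [MultiTransWrt, iterate_mul]

theorem multiTransWrt_iterate_iff_isTopTransitive {X : Type*} [TopologicalSpace X]
    (f : X → X) (n : ℕ) {r : ℕ} (a : Fin r → ℕ) :
    MultiTransWrt f^[n] a ↔ IsTopTransitive (Pi.map fun i => f^[a i])^[n] := by
  rw [Pi.map_iterate, MultiTransWrt]
  simp only [iterate_comm _ n]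
  rfl

theorem strongMultiTrans_iff_iterate_strongMultiTrans_general
    {X : Type*} [MetricSpace X] (f : X → X)
    (n : ℕ) (hn : 1 ≤ n) :
    StrongMultiTrans f ↔ StrongMultiTrans (f^[n]) := by
  constructor
  · intro h r hr a ha
    exact (multiTransWrt_iterate_iff f n a).2 (h r hr _ fun i => Nat.mul_pos hn (ha i))
  · intro h r hr a ha
    exact ((multiTransWrt_iterate_iff_isTopTransitive f n a).1 (h r hr a ha)).of_iterate hn

theorem strongMultiTrans_iff_iterate_strongMultiTrans
    {X : Type*} [MetricSpace X] [CompactSpace X] (f : X → X) (hf : Continuous f)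
    (n : ℕ) (hn : 1 ≤ n) :
    StrongMultiTrans f ↔ StrongMultiTrans (f^[n]) :=
  strongMultiTrans_iff_iterate_strongMultiTrans_general f n hn
end

section
/- Let (X,f) be a topological dynamical system and a = (a₁,…,a_r) a vector of positive integers. Then (X,f) is strongly multi-transitive if and only if the product system (X^r, f^{a₁} × f^{a₂} × ⋯ × f^{a_r}) is strongly multi-transitive. -/
open Function Set Filter Topology MeasureTheory

/-! Both directions pass transitivity to a factor. For `b ∈ ℕ^s`, the system
`((X^r)^s, ∏_j (∏_i f^{a_i})^{b_j})` is, after currying `X^{s·r} ≅ (X^r)^s`, the system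
`(X^{s·r}, ∏_{i,j} f^{a_i b_j})`. Conversely, projecting `(X^r)^k` onto a coordinate `i` gives the
factor `(X^k, ∏_j f^{a_i c_j})`, which is the `a_i`-th iterate of `∏_j f^{c_j}`, and a map with a
transitive positive iterate is transitive. -/

theorem iterate_pi_iterate {ι X : Type*} (f : X → X) (d : ι → ℕ) (n : ℕ) :
    (fun x : ι → X => fun i => f^[d i] (x i))^[n] = fun x i => f^[d i * n] (x i) := by
  induction n with
  | zero => rfl
  | succ n ih =>
    funext x i
    rw [iterate_succ_apply, ih, Nat.mul_succ, iterate_add_apply]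

section Transitive

variable {X : Type*} [TopologicalSpace X]

theorem IsTopTransitive.of_semiconj {Y : Type*} [TopologicalSpace Y] {F : X → X} {G : Y → Y}
    {π : X → Y} (h : IsTopTransitive F) (hπ : Continuous π) (hsurj : Surjective π)
    (hconj : Semiconj π F G) : IsTopTransitive G := by
  intro U V hU hV hUne hVne
  obtain ⟨n, hn, _, ⟨x, hxU, rfl⟩, hxV⟩ := h (π ⁻¹' U) (π ⁻¹' V) (hU.preimage hπ)
    (hV.preimage hπ) (hUne.preimage hsurj) (hVne.preimage hsurj)
  exact ⟨n, hn, π (F^[n] x), ⟨π x, hxU, (hconj.iterate_right n x).symm⟩, hxV⟩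

theorem IsTopTransitive.of_iterate_s3 {f : X → X} {m : ℕ} (hm : 1 ≤ m)
    (h : IsTopTransitive f^[m]) : IsTopTransitive f := by
  intro U V hU hV hUne hVne
  obtain ⟨n, hn, hUV⟩ := h U V hU hV hUne hVne
  exact ⟨m * n, Nat.mul_le_mul hm hn, by rwa [iterate_mul]⟩

variable {f : X → X} {r : ℕ} {a : Fin r → ℕ}

theorem MultiTransWrt.piIterate_of_curry {s : ℕ} {b : Fin s → ℕ}
    (h : MultiTransWrt f fun p : Fin (s * r) =>
      a (finProdFinEquiv.symm p).2 * b (finProdFinEquiv.symm p).1) :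
    MultiTransWrt (fun x : Fin r → X => fun i => f^[a i] (x i)) b := by
  refine IsTopTransitive.of_semiconj h (π := fun y j i => y (finProdFinEquiv (j, i))) (by fun_prop)
    (fun z => ⟨fun p => z (finProdFinEquiv.symm p).1 (finProdFinEquiv.symm p).2, by simp⟩) ?_
  intro y
  funext j i
  simp [iterate_pi_iterate]

theorem MultiTransWrt.of_piIterate {k : ℕ} {c : Fin k → ℕ}
    (h : MultiTransWrt (fun x : Fin r → X => fun i => f^[a i] (x i)) c) (i : Fin r) :
    MultiTransWrt f fun j => c j * a i := by
  refine IsTopTransitive.of_semiconj h (π := fun x j => x j i) (by fun_prop)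
    (fun z => ⟨fun j _ => z j, rfl⟩) ?_
  intro x
  funext j
  simp [iterate_pi_iterate, Nat.mul_comm]

theorem StrongMultiTrans.piIterate (hr : 1 ≤ r) (ha : ∀ i, 1 ≤ a i) (h : StrongMultiTrans f) :
    StrongMultiTrans fun x : Fin r → X => fun i => f^[a i] (x i) := by
  intro s hs b hb
  exact MultiTransWrt.piIterate_of_curry
    (h (s * r) (Nat.mul_le_mul hs hr) _ fun p => Nat.mul_le_mul (ha _) (hb _))

theorem StrongMultiTrans.of_piIterate (hr : 1 ≤ r) (ha : ∀ i, 1 ≤ a i)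
    (h : StrongMultiTrans fun x : Fin r → X => fun i => f^[a i] (x i)) : StrongMultiTrans f := by
  intro k hk c hc
  have hproj := (h k hk c hc).of_piIterate ⟨0, hr⟩
  refine IsTopTransitive.of_iterate_s3 (ha ⟨0, hr⟩) ?_
  rwa [iterate_pi_iterate]

end Transitive

theorem strongMultiTrans_iff_product_strongMultiTrans_general
    {X : Type*} [MetricSpace X] (f : X → X)
    (r : ℕ) (hr : 1 ≤ r) (a : Fin r → ℕ) (ha : ∀ i, 1 ≤ a i) :
    StrongMultiTrans f ↔
      StrongMultiTrans (fun x : Fin r → X => fun i => f^[a i] (x i)) :=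
  ⟨StrongMultiTrans.piIterate hr ha, StrongMultiTrans.of_piIterate hr ha⟩

theorem strongMultiTrans_iff_product_strongMultiTrans
    {X : Type*} [MetricSpace X] [CompactSpace X] (f : X → X) (hf : Continuous f)
    (r : ℕ) (hr : 1 ≤ r) (a : Fin r → ℕ) (ha : ∀ i, 1 ≤ a i) :
    StrongMultiTrans f ↔
      StrongMultiTrans (fun x : Fin r → X => fun i => f^[a i] (x i)) :=
  strongMultiTrans_iff_product_strongMultiTrans_general f r hr a ha
end

section
/- Let (X,f) be a topological dynamical system. Then (X,f) is strongly multi-transitive if and only if for every positive integer k the system (X^k, f × f² × ⋯ × f^k) is weakly mixing. -/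
open Function Set Filter Topology MeasureTheory

/-!
The system `T = f × f² × ⋯ × f^k` on `X^k` carries every power `f^a` with `a ≤ k` as a coordinate
factor, so for `a = (a₁, …, a_r)` with all `aᵢ ≤ k` the hitting times of `f^{a₁} × ⋯ × f^{a_r}`
between two boxes contain an intersection of `r` hitting-time sets of `T` between cylinders.
Furstenberg's intersection lemma makes such intersections non-empty as soon as `T` is weakly mixing.
Conversely, `(X^k × X^k, T × T)` is a factor of `(X^{2k}, f × ⋯ × f^k × f × ⋯ × f^k)`.
-/

section HittingTimes

variable {X Y ι : Type*} [TopologicalSpace X] [TopologicalSpace Y]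

theorem mem_hittingTimes {T : X → X} {U V : Set X} {n : ℕ} :
    n ∈ HittingTimes T U V ↔ 1 ≤ n ∧ (U ∩ T^[n] ⁻¹' V).Nonempty := by
  rw [HittingTimes, mem_ofPred_eq, image_inter_nonempty_iff]

theorem IsTopTransitive.hittingTimes_nonempty {T : X → X} (h : IsTopTransitive T) {U V : Set X}
    (hU : IsOpen U) (hV : IsOpen V) (hUne : U.Nonempty) (hVne : V.Nonempty) :
    (HittingTimes T U V).Nonempty :=
  h U V hU hV hUne hVne

theorem hittingTimes_mono {T : X → X} {U U' V V' : Set X} (hU : U ⊆ U') (hV : V ⊆ V') :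
    HittingTimes T U V ⊆ HittingTimes T U' V' := fun _ ⟨hn, hUV⟩ =>
  ⟨hn, hUV.mono (inter_subset_inter (image_mono hU) hV)⟩

theorem hittingTimes_preimage_subset {S : Y → Y} {T : X → X} {φ : Y → X} (h : Semiconj φ S T)
    (U V : Set X) : HittingTimes S (φ ⁻¹' U) (φ ⁻¹' V) ⊆ HittingTimes T U V := by
  intro n hn
  obtain ⟨hn, y, hyU, hyV⟩ := mem_hittingTimes.1 hn
  refine mem_hittingTimes.2 ⟨hn, φ y, hyU, ?_⟩
  rwa [mem_preimage, ← (h.iterate_right n) y]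

theorem IsTopTransitive.of_semiconj_s4 {S : Y → Y} {T : X → X} {φ : Y → X} (hS : IsTopTransitive S)
    (hφ : Continuous φ) (hφs : Surjective φ) (h : Semiconj φ S T) : IsTopTransitive T :=
  fun U V hU hV hUne hVne => Nonempty.mono (hittingTimes_preimage_subset h U V) <|
    hS _ _ (hU.preimage hφ) (hV.preimage hφ) (hUne.preimage hφs) (hVne.preimage hφs)

theorem hittingTimes_prodMap (S : Y → Y) (T : X → X) (U V : Set Y) (U' V' : Set X) :
    HittingTimes (Prod.map S T) (U ×ˢ U') (V ×ˢ V') =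
      HittingTimes S U V ∩ HittingTimes T U' V' := by
  ext n
  simp only [mem_inter_iff, mem_hittingTimes, Prod.map_iterate, preimage_prod_map_prod,
    prod_inter_prod, prod_nonempty_iff]
  tauto

theorem hittingTimes_piMap [Nonempty ι] (T : ι → X → X) (U V : ι → Set X) :
    HittingTimes (Pi.map T) (univ.pi U) (univ.pi V) = ⋂ i, HittingTimes (T i) (U i) (V i) := by
  ext n
  simp only [mem_iInter, mem_hittingTimes, Pi.map_iterate, forall_and, forall_const]
  exact and_congr_right fun _ => by rw [← univ_pi_nonempty_iff, pi_inter_distrib]; rfl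

theorem isTopTransitive_piMap [Finite ι] [Nonempty ι] {T : ι → X → X}
    (h : ∀ U V : ι → Set X, (∀ i, IsOpen (U i)) → (∀ i, IsOpen (V i)) →
      (∀ i, (U i).Nonempty) → (∀ i, (V i).Nonempty) →
      (⋂ i, HittingTimes (T i) (U i) (V i)).Nonempty) :
    IsTopTransitive (Pi.map T) := by
  rintro U V hU hV ⟨x, hx⟩ ⟨y, hy⟩
  obtain ⟨u, hu, huU⟩ := isOpen_pi_iff'.1 hU x hx
  obtain ⟨v, hv, hvV⟩ := isOpen_pi_iff'.1 hV y hy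
  have hN := h u v (fun i => (hu i).1) (fun i => (hv i).1) (fun i => ⟨x i, (hu i).2⟩)
    (fun i => ⟨y i, (hv i).2⟩)
  rw [← hittingTimes_piMap] at hN
  exact hN.mono (hittingTimes_mono huU hvV)

end HittingTimes

section WeaklyMixing

variable {X ι : Type*} [TopologicalSpace X] {T : X → X}

def IsTopWeaklyMixing (T : X → X) : Prop :=
  IsTopTransitive (Prod.map T T)

theorem IsTopWeaklyMixing.isTopTransitive (h : IsTopWeaklyMixing T) : IsTopTransitive T := by
  intro U V hU hV hUne hVne
  have hN := h.hittingTimes_nonempty (hU.prod hU) (hV.prod hV) (hUne.prod hUne) (hVne.prod hVne)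
  rwa [hittingTimes_prodMap, inter_self] at hN

/-- Furstenberg's intersection lemma: for `n ∈ N(U₁, U₂) ∩ N(V₁, V₂)`, every return time from
`U₁ ∩ T⁻ⁿ U₂` to `V₁ ∩ T⁻ⁿ V₂` is a return time from `U₁` to `V₁` and, shifted by `n`, from
`U₂` to `V₂`. -/
theorem IsTopWeaklyMixing.exists_hittingTimes_subset_inter (hT : Continuous T)
    (h : IsTopWeaklyMixing T) {U₁ V₁ U₂ V₂ : Set X} (hU₁ : IsOpen U₁) (hV₁ : IsOpen V₁)
    (hU₂ : IsOpen U₂) (hV₂ : IsOpen V₂) (hU₁ne : U₁.Nonempty) (hV₁ne : V₁.Nonempty)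
    (hU₂ne : U₂.Nonempty) (hV₂ne : V₂.Nonempty) :
    ∃ U V : Set X, IsOpen U ∧ IsOpen V ∧ U.Nonempty ∧ V.Nonempty ∧
      HittingTimes T U V ⊆ HittingTimes T U₁ V₁ ∩ HittingTimes T U₂ V₂ := by
  obtain ⟨n, hnU, hnV⟩ : (HittingTimes T U₁ U₂ ∩ HittingTimes T V₁ V₂).Nonempty := by
    rw [← hittingTimes_prodMap]
    exact h.hittingTimes_nonempty (hU₁.prod hV₁) (hU₂.prod hV₂) (hU₁ne.prod hV₁ne)
      (hU₂ne.prod hV₂ne)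
  refine ⟨U₁ ∩ T^[n] ⁻¹' U₂, V₁ ∩ T^[n] ⁻¹' V₂, hU₁.inter (hU₂.preimage (hT.iterate n)),
    hV₁.inter (hV₂.preimage (hT.iterate n)), (mem_hittingTimes.1 hnU).2,
    (mem_hittingTimes.1 hnV).2, fun m hm => ?_⟩
  obtain ⟨hm, x, ⟨hxU₁, hxU₂⟩, hxV₁, hxV₂⟩ := mem_hittingTimes.1 hm
  refine ⟨mem_hittingTimes.2 ⟨hm, x, hxU₁, hxV₁⟩, mem_hittingTimes.2 ⟨hm, T^[n] x, hxU₂, ?_⟩⟩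
  rwa [mem_preimage, ← iterate_add_apply, add_comm, iterate_add_apply]

theorem IsTopWeaklyMixing.iInter_hittingTimes_nonempty [Finite ι] [Nonempty ι]
    (hT : Continuous T) (h : IsTopWeaklyMixing T) {U V : ι → Set X} (hU : ∀ i, IsOpen (U i))
    (hV : ∀ i, IsOpen (V i)) (hUne : ∀ i, (U i).Nonempty) (hVne : ∀ i, (V i).Nonempty) :
    (⋂ i, HittingTimes T (U i) (V i)).Nonempty := by
  have := Fintype.ofFinite ι
  suffices ∀ s : Finset ι, s.Nonempty → ∃ A B : Set X, IsOpen A ∧ IsOpen B ∧ A.Nonempty ∧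
      B.Nonempty ∧ HittingTimes T A B ⊆ ⋂ i ∈ s, HittingTimes T (U i) (V i) by
    obtain ⟨A, B, hA, hB, hAne, hBne, hAB⟩ := this Finset.univ Finset.univ_nonempty
    simpa using (h.isTopTransitive.hittingTimes_nonempty hA hB hAne hBne).mono hAB
  classical
  intro s hs
  induction hs using Finset.Nonempty.cons_induction with
  | singleton i => exact ⟨U i, V i, hU i, hV i, hUne i, hVne i, by simp⟩
  | cons i s _ _ ih =>
    obtain ⟨A, B, hA, hB, hAne, hBne, hAB⟩ := ih
    obtain ⟨A', B', hA', hB', hA'ne, hB'ne, hA'B'⟩ := h.exists_hittingTimes_subset_inter hT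
      (hU i) (hV i) hA hB (hUne i) (hVne i) hAne hBne
    refine ⟨A', B', hA', hB', hA'ne, hB'ne, ?_⟩
    rw [Finset.cons_eq_insert, Finset.set_biInter_insert]
    exact hA'B'.trans (inter_subset_inter_right _ hAB)

end WeaklyMixing

section MultiTransitivity

variable {X : Type*} [TopologicalSpace X] {f : X → X}

theorem MultiTransWrt.isTopTransitive_prodMap {m n : ℕ} {a : Fin m → ℕ} {b : Fin n → ℕ}
    (h : MultiTransWrt f (Fin.append a b)) :
    IsTopTransitive (Prod.map (Pi.map fun i => f^[a i]) (Pi.map fun i => f^[b i])) := by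
  refine IsTopTransitive.of_semiconj_s4 (φ := fun x => (fun i => x (Fin.castAdd n i),
    fun i => x (Fin.natAdd m i))) h (by fun_prop) (fun p => ⟨Fin.append p.1 p.2, by simp⟩) ?_
  intro x
  simp only [Prod.map_apply, Fin.append_left, Fin.append_right]
  rfl

theorem StrongMultiTrans.isTopWeaklyMixing (h : StrongMultiTrans f) {r : ℕ} (hr : 1 ≤ r)
    {a : Fin r → ℕ} (ha : ∀ i, 1 ≤ a i) : IsTopWeaklyMixing (Pi.map fun i => f^[a i]) :=
  MultiTransWrt.isTopTransitive_prodMap <| h (r + r) (by omega) _ <|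
    (Fin.forall_fin_add _).2 ⟨fun i => by rw [Fin.append_left]; exact ha i,
      fun i => by rw [Fin.append_right]; exact ha i⟩

theorem IsTopWeaklyMixing.multiTransWrt (hf : Continuous f) {k : ℕ}
    (h : IsTopWeaklyMixing (Pi.map fun i : Fin k => f^[(i : ℕ) + 1])) {r : ℕ} (hr : 1 ≤ r)
    {a : Fin r → ℕ} (ha : ∀ i, 1 ≤ a i) (hak : ∀ i, a i ≤ k) : MultiTransWrt f a := by
  have : Nonempty (Fin r) := ⟨⟨0, hr⟩⟩
  refine isTopTransitive_piMap fun U V hU hV hUne hVne => ?_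
  have : Nonempty X := ⟨(hUne ⟨0, hr⟩).some⟩
  let j (i : Fin r) : Fin k := ⟨a i - 1, by have := ha i; have := hak i; omega⟩
  have hj (i : Fin r) : (j i : ℕ) + 1 = a i := Nat.sub_add_cancel (ha i)
  obtain ⟨n, hn⟩ := h.iInter_hittingTimes_nonempty (by fun_prop)
    (U := fun i => eval (j i) ⁻¹' U i) (V := fun i => eval (j i) ⁻¹' V i)
    (fun i => (hU i).preimage (continuous_apply _)) (fun i => (hV i).preimage (continuous_apply _))
    (fun i => (hUne i).preimage (surjective_eval _))
    (fun i => (hVne i).preimage (surjective_eval _))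
  refine ⟨n, mem_iInter.2 fun i => ?_⟩
  rw [← hj i]
  exact hittingTimes_preimage_subset (φ := eval (j i)) (fun _ => rfl) _ _ (mem_iInter.1 hn i)

end MultiTransitivity

theorem strongMultiTrans_iff_products_weaklyMixing_general
    {X : Type*} [MetricSpace X] (f : X → X) (hf : Continuous f) :
    StrongMultiTrans f ↔
      ∀ k : ℕ, 1 ≤ k →
        IsTopTransitive (fun p : (Fin k → X) × (Fin k → X) =>
          ((fun i => f^[(i : ℕ) + 1] (p.1 i)), (fun i => f^[(i : ℕ) + 1] (p.2 i)))) := by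
  refine ⟨fun h k hk => h.isTopWeaklyMixing hk fun i => Nat.succ_pos i, fun h r hr a ha => ?_⟩
  have hak : ∀ i, a i ≤ Finset.univ.sup a := fun i => Finset.le_sup (Finset.mem_univ i)
  exact IsTopWeaklyMixing.multiTransWrt hf (h _ ((ha ⟨0, hr⟩).trans (hak _))) hr ha hak

theorem strongMultiTrans_iff_products_weaklyMixing
    {X : Type*} [MetricSpace X] [CompactSpace X] (f : X → X) (hf : Continuous f) :
    StrongMultiTrans f ↔
      ∀ k : ℕ, 1 ≤ k →
        IsTopTransitive (fun p : (Fin k → X) × (Fin k → X) =>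
          ((fun i => f^[(i : ℕ) + 1] (p.1 i)), (fun i => f^[(i : ℕ) + 1] (p.2 i)))) :=
  strongMultiTrans_iff_products_weaklyMixing_general f hf
end

section
/- Let (X,f) be a topological dynamical system. Then (X,f) is multi-transitive if and only if for every two non-empty open subsets U, V of X the hitting time set N(U,V) belongs to F[∞], i.e., for every r ≥ 1 and every (n₁,…,n_r) ∈ ℤ₊^r there exists k ≥ 1 such that ki + n_i ∈ N(U,V) for all i = 1,…,r. -/
/-!
Shifted hitting times `k (i + 1) + nᵢ ∈ N(U, V)` are exactly a hit of the box `∏ᵢ f^{-nᵢ} V` from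
`Uʳ` under `f × f² × ⋯ × fʳ`, so multi-transitivity gives them. Conversely, transitivity pulls
finitely many open sets back into one open set along arbitrarily late times: choose `W'` with
`f^{tᵢ} W' ⊆ Vᵢ`, then `W` with `f^{sᵢ} W ⊆ Uᵢ` and `sᵢ ≥ tᵢ`; a common `k` with
`k (i + 1) + (sᵢ - tᵢ) ∈ N(W, W')` then carries the box `∏ Uᵢ` into `∏ Vᵢ` at time `k`.
-/

open Function Set Filter Topology MeasureTheory

section

variable {X : Type*} [TopologicalSpace X] {f : X → X}

theorem mem_hittingTimes_iff {U V : Set X} {n : ℕ} :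
    n ∈ HittingTimes f U V ↔ 1 ≤ n ∧ (U ∩ f^[n] ⁻¹' V).Nonempty :=
  and_congr_right' image_inter_nonempty_iff

theorem multiTransWrt_iff_forall_pi {r : ℕ} {a : Fin r → ℕ} :
    MultiTransWrt f a ↔ ∀ U V : Fin r → Set X, (∀ i, IsOpen (U i)) → (∀ i, IsOpen (V i)) →
      (∀ i, (U i).Nonempty) → (∀ i, (V i).Nonempty) →
        ∃ n, 1 ≤ n ∧ ∀ i, (U i ∩ f^[n * a i] ⁻¹' V i).Nonempty := by
  have iterate_eq (n : ℕ) : (fun x : Fin r → X => fun i => f^[a i] (x i))^[n] =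
      Pi.map fun i => f^[n * a i] := by
    change (Pi.map fun i => f^[a i])^[n] = _
    simp only [Pi.map_iterate, mul_comm n, Function.iterate_mul]
  constructor
  · intro h U V hU hV hU' hV'
    obtain ⟨n, hn, y, ⟨x, hx, rfl⟩, hy⟩ := h (univ.pi U) (univ.pi V)
      (isOpen_set_pi finite_univ fun i _ => hU i) (isOpen_set_pi finite_univ fun i _ => hV i)
      (univ_pi_nonempty_iff.2 hU') (univ_pi_nonempty_iff.2 hV')
    rw [iterate_eq] at hy
    exact ⟨n, hn, fun i => ⟨x i, hx i (mem_univ i), hy i (mem_univ i)⟩⟩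
  · rintro h U V hU hV ⟨u, hu⟩ ⟨v, hv⟩
    obtain ⟨BU, hBU, hBU_sub⟩ := isOpen_pi_iff'.1 hU u hu
    obtain ⟨BV, hBV, hBV_sub⟩ := isOpen_pi_iff'.1 hV v hv
    obtain ⟨n, hn, hBUV⟩ := h BU BV (fun i => (hBU i).1) (fun i => (hBV i).1)
      (fun i => ⟨u i, (hBU i).2⟩) (fun i => ⟨v i, (hBV i).2⟩)
    choose x hxU hxV using hBUV
    refine ⟨n, hn, _, mem_image_of_mem _ (hBU_sub fun i _ => hxU i), hBV_sub fun i _ => ?_⟩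
    rw [iterate_eq]
    exact hxV i

namespace IsTopTransitive

variable (htr : IsTopTransitive f) (hf : Continuous f)
include htr hf

theorem exists_le_inter_preimage_nonempty {U V : Set X} (hU : IsOpen U) (hV : IsOpen V)
    (hU' : U.Nonempty) (hV' : V.Nonempty) (M : ℕ) :
    ∃ n, M ≤ n ∧ (U ∩ f^[n] ⁻¹' V).Nonempty := by
  induction M with
  | zero =>
    obtain ⟨n, -, hn⟩ := htr U V hU hV hU' hV'
    exact ⟨n, n.zero_le, image_inter_nonempty_iff.1 hn⟩
  | succ M ih =>
    obtain ⟨n, hMn, hUV⟩ := ih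
    -- return to `U ∩ f^[n] ⁻¹' V` after at least one more step
    obtain ⟨m, hm, hUUV⟩ := htr U _ hU (hU.inter ((hf.iterate n).isOpen_preimage _ hV)) hU' hUV
    obtain ⟨x, hx, -, hxV⟩ := image_inter_nonempty_iff.1 hUUV
    refine ⟨n + m, by omega, x, hx, ?_⟩
    rwa [mem_preimage, Function.iterate_add_apply]

theorem preimage_iterate_nonempty {V : Set X} (hV : IsOpen V) (hV' : V.Nonempty) (m : ℕ) :
    (f^[m] ⁻¹' V).Nonempty := by
  obtain ⟨n, hmn, x, -, hx⟩ := htr.exists_le_inter_preimage_nonempty hf hV hV hV' hV' m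
  refine ⟨f^[n - m] x, ?_⟩
  rwa [mem_preimage, ← Function.iterate_add_apply, Nat.add_sub_cancel' hmn]

theorem exists_isOpen_mapsTo_iterate [Nonempty X] {ι : Type*} [Finite ι] (A : ι → Set X)
    (hA : ∀ i, IsOpen (A i)) (hA' : ∀ i, (A i).Nonempty) (b : ι → ℕ) :
    ∃ W, IsOpen W ∧ W.Nonempty ∧ ∃ s : ι → ℕ, ∀ i, b i ≤ s i ∧ MapsTo f^[s i] W (A i) := by
  classical
  cases nonempty_fintype ι
  suffices ∀ S : Finset ι, ∃ W, IsOpen W ∧ W.Nonempty ∧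
      ∃ s : ι → ℕ, ∀ i ∈ S, b i ≤ s i ∧ MapsTo f^[s i] W (A i) by
    obtain ⟨W, hW, hW', s, hs⟩ := this Finset.univ
    exact ⟨W, hW, hW', s, fun i => hs i (Finset.mem_univ i)⟩
  intro S
  induction S using Finset.induction_on with
  | empty => exact ⟨univ, isOpen_univ, univ_nonempty, 0, by simp⟩
  | insert j S hj ih =>
    obtain ⟨W, hW, hW', s, hs⟩ := ih
    obtain ⟨n, hbn, hWA⟩ := htr.exists_le_inter_preimage_nonempty hf hW (hA j) hW' (hA' j) (b j)
    refine ⟨W ∩ f^[n] ⁻¹' A j, hW.inter ((hf.iterate n).isOpen_preimage _ (hA j)), hWA,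
      Function.update s j n, fun i hi => ?_⟩
    rcases Finset.mem_insert.1 hi with rfl | hiS
    · simpa using ⟨hbn, fun x hx => hx.2⟩
    · have hij : i ≠ j := fun h => hj (h ▸ hiS)
      simpa [hij] using ⟨(hs i hiS).1, (hs i hiS).2.mono_left inter_subset_left⟩

end IsTopTransitive

def familyInfty : Set (Set ℕ) :=
  {F | ∀ r : ℕ, 1 ≤ r → ∀ nv : Fin r → ℕ, ∃ k : ℕ, 1 ≤ k ∧
    ∀ i : Fin r, k * ((i : ℕ) + 1) + nv i ∈ F}

namespace MultiTrans

variable (h : MultiTrans f)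
include h

theorem isTopTransitive : IsTopTransitive f := by
  intro U V hU hV hU' hV'
  obtain ⟨n, hn, hUV⟩ := multiTransWrt_iff_forall_pi.1 (h 1 le_rfl) (fun _ => U) (fun _ => V)
    (fun _ => hU) (fun _ => hV) (fun _ => hU') (fun _ => hV')
  exact ⟨n, hn, image_inter_nonempty_iff.2 (by simpa using hUV 0)⟩

theorem hittingTimes_mem_familyInfty (hf : Continuous f) {U V : Set X} (hU : IsOpen U)
    (hV : IsOpen V) (hU' : U.Nonempty) (hV' : V.Nonempty) :
    HittingTimes f U V ∈ familyInfty := by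
  intro r hr nv
  obtain ⟨k, hk, hUV⟩ := multiTransWrt_iff_forall_pi.1 (h r hr) (fun _ => U)
    (fun i => f^[nv i] ⁻¹' V) (fun _ => hU) (fun _ => (hf.iterate _).isOpen_preimage _ hV)
    (fun _ => hU') (fun _ => h.isTopTransitive.preimage_iterate_nonempty hf hV hV' _)
  refine ⟨k, hk, fun i => mem_hittingTimes_iff.2 ⟨?_, ?_⟩⟩
  · nlinarith
  · rw [add_comm, Function.iterate_add, preimage_comp]
    exact hUV i

end MultiTrans

theorem multiTrans_of_forall_hittingTimes_mem_familyInfty (hf : Continuous f)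
    (h : ∀ U V : Set X, IsOpen U → IsOpen V → U.Nonempty → V.Nonempty →
      HittingTimes f U V ∈ familyInfty) :
    MultiTrans f := by
  have htr : IsTopTransitive f := fun U V hU hV hU' hV' => by
    obtain ⟨k, -, hk⟩ := h U V hU hV hU' hV' 1 le_rfl 0
    exact ⟨_, (hk 0).1, (hk 0).2⟩
  intro r hr
  rw [multiTransWrt_iff_forall_pi]
  intro U V hU hV hU' hV'
  have : Nonempty X := ⟨(hU' ⟨0, hr⟩).some⟩
  obtain ⟨W', hW', hW'ne, t, ht⟩ := htr.exists_isOpen_mapsTo_iterate hf V hV hV' 0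
  obtain ⟨W, hW, hWne, s, hs⟩ := htr.exists_isOpen_mapsTo_iterate hf U hU hU' t
  obtain ⟨k, hk, hkW⟩ := h W W' hW hW' hWne hW'ne r hr (fun i => s i - t i)
  refine ⟨k, hk, fun i => ?_⟩
  obtain ⟨-, w, hw, hwW'⟩ := mem_hittingTimes_iff.1 (hkW i)
  have htime : k * (i + 1) + s i = t i + (k * (i + 1) + (s i - t i)) := by
    have := (hs i).1
    omega
  refine ⟨f^[s i] w, (hs i).2 hw, ?_⟩
  rw [mem_preimage, ← Function.iterate_add_apply, htime, Function.iterate_add_apply]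
  exact (ht i).2 hwW'

end

theorem multiTrans_iff_familyInfty_transitive_general
    {X : Type*} [MetricSpace X] (f : X → X) (hf : Continuous f) :
    MultiTrans f ↔
      ∀ U V : Set X, IsOpen U → IsOpen V → U.Nonempty → V.Nonempty →
        ∀ r : ℕ, 1 ≤ r → ∀ nv : Fin r → ℕ, ∃ k : ℕ, 1 ≤ k ∧
          ∀ i : Fin r, k * ((i : ℕ) + 1) + nv i ∈ HittingTimes f U V :=
  ⟨fun h _ _ hU hV hU' hV' => h.hittingTimes_mem_familyInfty hf hU hV hU' hV',
    multiTrans_of_forall_hittingTimes_mem_familyInfty hf⟩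

theorem multiTrans_iff_familyInfty_transitive
    {X : Type*} [MetricSpace X] [CompactSpace X] (f : X → X) (hf : Continuous f) :
    MultiTrans f ↔
      ∀ U V : Set X, IsOpen U → IsOpen V → U.Nonempty → V.Nonempty →
        ∀ r : ℕ, 1 ≤ r → ∀ nv : Fin r → ℕ, ∃ k : ℕ, 1 ≤ k ∧
          ∀ i : Fin r, k * ((i : ℕ) + 1) + nv i ∈ HittingTimes f U V :=
  multiTrans_iff_familyInfty_transitive_general f hf
end
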